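/- For all r-dimensional subspaces V, V' and all (d−r)-dimensional subspaces W of R^d, |∠(V,W) − ∠(V',W)| ≤ 2r·d_H(V,V'). -/

import Mathlib

/-!
With `Q` the orthogonal projection onto `(span w)ᗮ`, base times height gives
`wnorm (v ++ w) = wnorm w * wnorm (Q ∘ v)`, and writing `v` in an orthonormal basis `e` of `V`
scales `wnorm (Q ∘ v)` and `wnorm v` by the same determinant, so `∠(V, W) = wnorm (Q ∘ e)`.
Let `e'` be an orthonormal basis of `V'` and `u` the projection of `e` onto `V'`, so that
`‖e i - u i‖ ≤ d_H(V, V')`. On families of vectors of norm at most one the wedge norm is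
1-Lipschitz in each vector (base times height, with Hadamard's inequality bounding the base), so
`wnorm (Q ∘ e)` is within `r d_H` of `wnorm (Q ∘ u) = wnorm u * wnorm (Q ∘ e')`, and `wnorm u`
is within `r d_H` of `wnorm e = 1`.
-/

open scoped RealInnerProductSpace

noncomputable section

abbrev Euc (d : ℕ) := EuclideanSpace ℝ (Fin d)

/-- Norm of the wedge product of a family of vectors (square root of Gram determinant). -/
def wnorm {d : ℕ} {ι : Type*} [Fintype ι] [DecidableEq ι] (x : ι → Euc d) : ℝ :=
  Real.sqrt (Matrix.of fun i j => ⟪x i, x j⟫).det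

/-- `d_H(V, V') = sup` over unit vectors `v ∈ V` of `dist(v, V')`. -/
def dH {d : ℕ} (V V' : Submodule ℝ (Euc d)) : ℝ :=
  sSup {c | ∃ v ∈ V, ‖v‖ = 1 ∧ c = Metric.infDist v (V' : Set (Euc d))}

open Matrix Submodule Metric Set InnerProductSpace

theorem Matrix.gram_linearCombination {E ι : Type*} [NormedAddCommGroup E]
    [InnerProductSpace ℝ E] [Fintype ι] (A : Matrix ι ι ℝ) (x : ι → E) :
    gram ℝ (fun i => ∑ k, A i k • x k) = A * gram ℝ x * Aᵀ := by
  ext i j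
  simp only [gram_apply, sum_inner, inner_sum, real_inner_smul_left, real_inner_smul_right,
    mul_apply, transpose_apply, Finset.sum_mul]
  exact Finset.sum_congr rfl fun _ _ => Finset.sum_congr rfl fun _ _ => by ring

theorem Metric.infDist_eq_norm_starProjection_orthogonal {E : Type*} [NormedAddCommGroup E]
    [InnerProductSpace ℝ E] (U : Submodule ℝ E) [U.HasOrthogonalProjection] (a : E) :
    infDist a U = ‖Uᗮ.starProjection a‖ := by
  rw [starProjection_orthogonal_val, starProjection_minimal, infDist_eq_iInf]
  exact iInf_congr fun _ => dist_eq_norm _ _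

section Wedge

variable {d : ℕ} {ι κ : Type*} [Fintype ι] [DecidableEq ι] [Fintype κ] [DecidableEq κ]

theorem wnorm_eq_sqrt_det_gram (x : ι → Euc d) : wnorm x = √(gram ℝ x).det := rfl

theorem wnorm_nonneg (x : ι → Euc d) : 0 ≤ wnorm x := Real.sqrt_nonneg _

theorem wnorm_pos {x : ι → Euc d} (hx : LinearIndependent ℝ x) : 0 < wnorm x :=
  Real.sqrt_pos.mpr (posDef_gram_of_linearIndependent hx).det_pos

theorem wnorm_of_orthonormal {x : ι → Euc d} (hx : Orthonormal ℝ x) : wnorm x = 1 := by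
  rw [wnorm_eq_sqrt_det_gram, gram_eq_one_iff_orthonormal.mpr hx, det_one, Real.sqrt_one]

theorem wnorm_of_isEmpty [IsEmpty ι] (x : ι → Euc d) : wnorm x = 1 := by
  rw [wnorm_eq_sqrt_det_gram, det_isEmpty, Real.sqrt_one]

theorem wnorm_of_unique [Unique ι] (x : ι → Euc d) : wnorm x = ‖x default‖ := by
  rw [wnorm_eq_sqrt_det_gram, det_unique, gram_apply, real_inner_self_eq_norm_sq,
    Real.sqrt_sq (norm_nonneg _)]

theorem wnorm_comp_equiv (e : κ ≃ ι) (x : ι → Euc d) : wnorm (x ∘ e) = wnorm x :=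
  congrArg Real.sqrt (det_submatrix_equiv_self e (gram ℝ x))

theorem wnorm_linearCombination (A : Matrix ι ι ℝ) (x : ι → Euc d) :
    wnorm (fun i => ∑ k, A i k • x k) = |A.det| * wnorm x := by
  rw [wnorm_eq_sqrt_det_gram, wnorm_eq_sqrt_det_gram, gram_linearCombination, det_mul, det_mul,
    det_transpose, mul_right_comm, ← sq, Real.sqrt_mul (sq_nonneg _), Real.sqrt_sq_eq_abs]

theorem wnorm_sumElim_of_inner_eq_zero {x : ι → Euc d} {y : κ → Euc d}
    (h : ∀ i j, ⟪x i, y j⟫ = 0) : wnorm (Sum.elim x y) = wnorm x * wnorm y := by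
  have hgram : gram ℝ (Sum.elim x y) = fromBlocks (gram ℝ x) 0 0 (gram ℝ y) := by
    ext (i | i) (j | j)
    · rfl
    · exact h i j
    · exact (real_inner_comm _ _).trans (h j i)
    · rfl
  rw [wnorm_eq_sqrt_det_gram, hgram, det_fromBlocks_zero₁₂,
    Real.sqrt_mul ((posSemidef_gram ℝ x).det_nonneg)]
  rfl

theorem wnorm_sumElim_sub_linearCombination (x : ι → Euc d) (y : κ → Euc d) (c : κ → ι → ℝ) :
    wnorm (Sum.elim x fun j => y j - ∑ i, c j i • x i) = wnorm (Sum.elim x y) := by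
  have hcomb : (Sum.elim x fun j => y j - ∑ i, c j i • x i) =
      fun m => ∑ k, fromBlocks 1 0 (-of c) 1 m k • Sum.elim x y k := by
    ext1 (i | j)
    · simp [Fintype.sum_sum_type, one_apply, ite_smul]
    · simp [Fintype.sum_sum_type, one_apply, ite_smul, sub_eq_neg_add]
  rw [hcomb, wnorm_linearCombination, det_fromBlocks_zero₁₂, det_one, det_one, mul_one, abs_one,
    one_mul]

theorem wnorm_sumElim (x : ι → Euc d) (y : κ → Euc d) :
    wnorm (Sum.elim x y) = wnorm x * wnorm ((span ℝ (range x))ᗮ.starProjection ∘ y) := by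
  set U := span ℝ (range x)
  -- removing from each `y j` its projection onto `U` is a unitriangular change of the family,
  -- after which the Gram matrix is block diagonal
  choose c hc using fun j => (mem_span_range_iff_exists_fun ℝ).mp (U.starProjection_apply_mem (y j))
  have hproj : (Uᗮ.starProjection ∘ y) = fun j => y j - ∑ i, c j i • x i := by
    ext1 j
    rw [Function.comp_apply, starProjection_orthogonal_val, hc]
  rw [hproj, ← wnorm_sumElim_sub_linearCombination x y c]
  refine wnorm_sumElim_of_inner_eq_zero fun i j => ?_
  rw [hc, ← starProjection_orthogonal_val]
  exact inner_right_of_mem_orthogonal (subset_span (mem_range_self i))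
    (Uᗮ.starProjection_apply_mem _)

theorem wnorm_option (x : Option ι → Euc d) :
    wnorm x = wnorm (x ∘ some) * infDist (x none) (span ℝ (range (x ∘ some))) := by
  have hx : x ∘ (Equiv.optionEquivSumPUnit ι).symm =
      Sum.elim (x ∘ some) fun _ : Unit => x none := by
    ext1 (i | i) <;> rfl
  rw [← wnorm_comp_equiv (Equiv.optionEquivSumPUnit ι).symm, hx, wnorm_sumElim,
    infDist_eq_norm_starProjection_orthogonal]
  exact congrArg _ (wnorm_of_unique _)

theorem wnorm_eq_mul_infDist (x : ι → Euc d) (i : ι) :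
    wnorm x = wnorm (fun j : {j // j ≠ i} => x j) *
      infDist (x i) (span ℝ (range fun j : {j // j ≠ i} => x j)) := by
  rw [← wnorm_comp_equiv (Equiv.optionSubtypeNe i), wnorm_option]
  rfl

theorem wnorm_le_prod_norm (x : ι → Euc d) : wnorm x ≤ ∏ i, ‖x i‖ := by
  refine Fintype.induction_empty_option
    (P := fun ι _ => ∀ [DecidableEq ι] (x : ι → Euc d), wnorm x ≤ ∏ i, ‖x i‖) ?_ ?_ ?_ ι x
  · intro α β _ e ih _ x
    classical
    let := Fintype.ofEquiv β e.symm
    rw [← wnorm_comp_equiv e, ← Fintype.prod_equiv e (fun a => ‖x (e a)‖) _ fun _ => rfl]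
    exact ih (x ∘ e)
  · intro _ x
    rw [wnorm_of_isEmpty, Finset.univ_eq_empty, Finset.prod_empty]
  · intro α _ ih _ x
    classical
    have hheight : infDist (x none) (span ℝ (range (x ∘ some))) ≤ ‖x none‖ := by
      simpa using infDist_le_dist_of_mem (x := x none) (zero_mem (span ℝ (range (x ∘ some))))
    calc wnorm x = wnorm (x ∘ some) * infDist (x none) (span ℝ (range (x ∘ some))) := by
          convert wnorm_option x
      _ ≤ (∏ i, ‖x (some i)‖) * ‖x none‖ :=
          mul_le_mul (ih _) hheight infDist_nonneg (Finset.prod_nonneg fun _ _ => norm_nonneg _)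
      _ = ∏ i, ‖x i‖ := by rw [Fintype.prod_option, mul_comm]

theorem abs_wnorm_update_sub_le (x : ι → Euc d) (i : ι) (a b : Euc d) :
    |wnorm (Function.update x i a) - wnorm (Function.update x i b)| ≤
      ‖a - b‖ * wnorm (fun j : {j // j ≠ i} => x j) := by
  have hrest (c : Euc d) :
      (fun j : {j // j ≠ i} => Function.update x i c j) = fun j : {j // j ≠ i} => x j :=
    funext fun j => Function.update_of_ne j.2 _ _
  rw [wnorm_eq_mul_infDist _ i, wnorm_eq_mul_infDist (Function.update x i b) i, hrest, hrest,
    Function.update_self, Function.update_self, ← mul_sub, abs_mul,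
    abs_of_nonneg (wnorm_nonneg _), mul_comm, ← dist_eq_norm, ← Real.dist_eq]
  exact mul_le_mul_of_nonneg_right (by simpa using (lipschitz_infDist_pt _).dist_le_mul a b)
    (wnorm_nonneg _)

theorem abs_wnorm_sub_le_sum_norm_sub {x y : ι → Euc d} (hx : ∀ i, ‖x i‖ ≤ 1)
    (hy : ∀ i, ‖y i‖ ≤ 1) : |wnorm x - wnorm y| ≤ ∑ i, ‖x i - y i‖ := by
  suffices ∀ s : Finset ι, |wnorm (s.piecewise x y) - wnorm y| ≤ ∑ i ∈ s, ‖x i - y i‖ by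
    simpa using this Finset.univ
  intro s
  induction s using Finset.induction_on with
  | empty => simp
  | insert a s ha ih =>
    set z := s.piecewise x y
    have hz : ∀ j, ‖z j‖ ≤ 1 := fun j => by
      by_cases hj : j ∈ s <;> simp [z, hj, hx, hy]
    have hza : Function.update z a (y a) = z := by
      rw [Function.update_eq_iff]
      exact ⟨(Finset.piecewise_eq_of_notMem _ _ _ ha).symm, fun _ _ => rfl⟩
    have hrest : wnorm (fun j : {j // j ≠ a} => z j) ≤ 1 :=
      (wnorm_le_prod_norm _).trans (Finset.prod_le_one (fun _ _ => norm_nonneg _) fun j _ => hz j)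
    have hstep : |wnorm ((insert a s).piecewise x y) - wnorm z| ≤ ‖x a - y a‖ := by
      have := abs_wnorm_update_sub_le z a (x a) (y a)
      rw [hza] at this
      rw [Finset.piecewise_insert]
      exact this.trans (mul_le_of_le_one_right (norm_nonneg _) hrest)
    calc |wnorm ((insert a s).piecewise x y) - wnorm y|
        ≤ |wnorm ((insert a s).piecewise x y) - wnorm z| + |wnorm z - wnorm y| :=
          abs_sub_le _ _ _
      _ ≤ ‖x a - y a‖ + ∑ i ∈ s, ‖x i - y i‖ := add_le_add hstep ih
      _ = ∑ i ∈ insert a s, ‖x i - y i‖ := by rw [Finset.sum_insert ha]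

theorem wnorm_comp_of_mem_span_orthonormal {x e : ι → Euc d} (he : Orthonormal ℝ e)
    (hx : ∀ i, x i ∈ span ℝ (range e)) (Q : Euc d →L[ℝ] Euc d) :
    wnorm (Q ∘ x) = wnorm x * wnorm (Q ∘ e) := by
  choose A hA using fun i => (mem_span_range_iff_exists_fun ℝ).mp (hx i)
  have hxA : x = fun i => ∑ k, of A i k • e k := funext fun i => (hA i).symm
  have hQx : Q ∘ x = fun i => ∑ k, of A i k • (Q ∘ e) k := by
    ext1 i
    simp [hxA, map_sum, map_smul]
  rw [hQx, wnorm_linearCombination, hxA, wnorm_linearCombination, wnorm_of_orthonormal he, mul_one]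

theorem abs_wnorm_comp_sub_le {e e' : ι → Euc d} (he : Orthonormal ℝ e) (he' : Orthonormal ℝ e')
    (Q : Euc d →L[ℝ] Euc d) (hQ : ‖Q‖ ≤ 1) {δ : ℝ}
    (hδ : ∀ i, infDist (e i) (span ℝ (range e')) ≤ δ) :
    |wnorm (Q ∘ e) - wnorm (Q ∘ e')| ≤ 2 * Fintype.card ι * δ := by
  set U := span ℝ (range e')
  set u := fun i => U.starProjection (e i)
  have hQ_le (a : Euc d) : ‖Q a‖ ≤ ‖a‖ := by simpa using Q.le_of_opNorm_le hQ a
  have hu (i : ι) : ‖u i‖ ≤ 1 := (U.norm_starProjection_apply_le _).trans (he.1 i).le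
  have hdist : ∑ i, ‖e i - u i‖ ≤ Fintype.card ι * δ := by
    calc ∑ i, ‖e i - u i‖ ≤ ∑ _i : ι, δ := Finset.sum_le_sum fun i _ => by
          rw [← starProjection_orthogonal_val, ← infDist_eq_norm_starProjection_orthogonal]
          exact hδ i
      _ = Fintype.card ι * δ := by simp
  have hQu : |wnorm (Q ∘ e) - wnorm (Q ∘ u)| ≤ Fintype.card ι * δ := by
    refine (abs_wnorm_sub_le_sum_norm_sub (fun i => (hQ_le _).trans (he.1 i).le)
      (fun i => (hQ_le _).trans (hu i))).trans ((Finset.sum_le_sum fun i _ => ?_).trans hdist)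
    simpa only [Function.comp_apply, ← map_sub] using hQ_le (e i - u i)
  have hu_vol : |wnorm u - 1| ≤ Fintype.card ι * δ := by
    rw [← wnorm_of_orthonormal he, abs_sub_comm]
    exact (abs_wnorm_sub_le_sum_norm_sub (fun i => (he.1 i).le) hu).trans hdist
  have hQe' : wnorm (Q ∘ e') ≤ 1 := (wnorm_le_prod_norm _).trans
    (Finset.prod_le_one (fun _ _ => norm_nonneg _) fun i _ => (hQ_le _).trans (he'.1 i).le)
  have hfactor : wnorm (Q ∘ u) = wnorm u * wnorm (Q ∘ e') :=
    wnorm_comp_of_mem_span_orthonormal he' (fun i => U.starProjection_apply_mem _) Q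
  calc |wnorm (Q ∘ e) - wnorm (Q ∘ e')|
      ≤ |wnorm (Q ∘ e) - wnorm (Q ∘ u)| + |wnorm (Q ∘ u) - wnorm (Q ∘ e')| := abs_sub_le _ _ _
    _ = |wnorm (Q ∘ e) - wnorm (Q ∘ u)| + |wnorm u - 1| * wnorm (Q ∘ e') := by
        rw [hfactor, ← sub_one_mul, abs_mul, abs_of_nonneg (wnorm_nonneg _)]
    _ ≤ Fintype.card ι * δ + Fintype.card ι * δ * 1 :=
        add_le_add hQu (mul_le_mul hu_vol hQe' (wnorm_nonneg _) ((abs_nonneg _).trans hu_vol))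
    _ = 2 * Fintype.card ι * δ := by ring

theorem wnorm_sumElim_div_mul {v e : ι → Euc d} {w : κ → Euc d} (he : Orthonormal ℝ e)
    (hve : ∀ i, v i ∈ span ℝ (range e)) (hv : wnorm v ≠ 0) (hw : wnorm w ≠ 0) :
    wnorm (Sum.elim v w) / (wnorm v * wnorm w) =
      wnorm ((span ℝ (range w))ᗮ.starProjection ∘ e) := by
  have hswap : Sum.elim w v ∘ Equiv.sumComm ι κ = Sum.elim v w := by
    ext1 (i | j) <;> rfl
  rw [← hswap, wnorm_comp_equiv, wnorm_sumElim, wnorm_comp_of_mem_span_orthonormal he hve]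
  field_simp

theorem wnorm_append {m n : ℕ} (v : Fin m → Euc d) (w : Fin n → Euc d) :
    wnorm (Fin.append v w) = wnorm (Sum.elim v w) := by
  rw [← wnorm_comp_equiv finSumFinEquiv]
  exact congrArg wnorm Fin.append_comp_sumElim

end Wedge

theorem infDist_le_dH {d : ℕ} {V V' : Submodule ℝ (Euc d)} {x : Euc d} (hx : x ∈ V)
    (hx_norm : ‖x‖ = 1) : infDist x V' ≤ dH V V' := by
  refine le_csSup ⟨1, ?_⟩ ⟨x, hx, hx_norm, rfl⟩
  rintro _ ⟨y, -, hy_norm, rfl⟩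
  simpa [hy_norm] using infDist_le_dist_of_mem (x := y) (zero_mem V')

theorem stmt4_general {d r : ℕ} (V V' : Submodule ℝ (Euc d))
    (v v' : Fin r → Euc d) (w : Fin (d - r) → Euc d)
    (hv : LinearIndependent ℝ v) (hv' : LinearIndependent ℝ v') (hw : LinearIndependent ℝ w)
    (hvV : Submodule.span ℝ (Set.range v) = V)
    (hv'V' : Submodule.span ℝ (Set.range v') = V') :
    |wnorm (Fin.append v w) / (wnorm v * wnorm w) -
        wnorm (Fin.append v' w) / (wnorm v' * wnorm w)| ≤ 2 * r * dH V V' := by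
  subst hvV hv'V'
  have hspan (u : Fin r → Euc d) :
      span ℝ (range (gramSchmidtNormed ℝ u)) = span ℝ (range u) := by
    rw [span_gramSchmidtNormed_range, span_gramSchmidt]
  have hangle (u : Fin r → Euc d) (hu : LinearIndependent ℝ u) :
      wnorm (Fin.append u w) / (wnorm u * wnorm w) =
        wnorm ((span ℝ (range w))ᗮ.starProjection ∘ gramSchmidtNormed ℝ u) := by
    rw [wnorm_append, wnorm_sumElim_div_mul (gramSchmidtNormed_orthonormal hu)
      (fun i => hspan u ▸ subset_span (mem_range_self i)) (wnorm_pos hu).ne' (wnorm_pos hw).ne']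
  have hδ (i : Fin r) : infDist (gramSchmidtNormed ℝ v i) (span ℝ (range (gramSchmidtNormed ℝ v')))
      ≤ dH (span ℝ (range v)) (span ℝ (range v')) := by
    rw [hspan]
    exact infDist_le_dH (hspan v ▸ subset_span (mem_range_self i))
      (gramSchmidtNormed_unit_length i hv)
  rw [hangle v hv, hangle v' hv']
  simpa using abs_wnorm_comp_sub_le (gramSchmidtNormed_orthonormal hv)
    (gramSchmidtNormed_orthonormal hv') _ (starProjection_norm_le _) hδ

theorem stmt4 {d r : ℕ} (hrd : r ≤ d) (V V' W : Submodule ℝ (Euc d))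
    (v v' : Fin r → Euc d) (w : Fin (d - r) → Euc d)
    (hv : LinearIndependent ℝ v) (hv' : LinearIndependent ℝ v') (hw : LinearIndependent ℝ w)
    (hvV : Submodule.span ℝ (Set.range v) = V)
    (hv'V' : Submodule.span ℝ (Set.range v') = V')
    (hwW : Submodule.span ℝ (Set.range w) = W) :
    |wnorm (Fin.append v w) / (wnorm v * wnorm w) -
        wnorm (Fin.append v' w) / (wnorm v' * wnorm w)| ≤ 2 * r * dH V V' :=
  stmt4_general V V' v v' w hv hv' hw hvV hv'V'
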